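/- arXiv:1505.00019 — 8 statements merged into one kernel-verified Lean document; each statement's English description precedes it below -/
import Mathlib

section
/- The uniform morphism φ on {1,2,3} with φ(1)=12321, φ(2)=23132, φ(3)=31213 is cubefree: for every cubefree word W, the image φ(W) is cubefree. -/
/-!
`phi` is uniform of length 5, and an image `phi a` occurs in `phi b ++ phi c` only at
positions 0 and 5. So if `x ++ x ++ x` is a factor of `applyM phi W` with `5 ≤ |x|`, an
aligned block `phi a` inside the first two copies of `x` reappears `|x|` positions later,
which forces `5 ∣ |x|`. The blocks of the cube are then aligned, and as the last letter of `phi a`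
determines `a`, they decode to a cube in `W`. A cube with `|x| ≤ 4` lies in the image of a
factor of `W` of length at most 4, and these finitely many words are checked by computation.
-/

/-- A square: a word of the form `x ++ x` with `x` nonempty. -/
def IsSq {α : Type*} (w : List α) : Prop := ∃ x : List α, x ≠ [] ∧ w = x ++ x

/-- A cube: a word of the form `x ++ x ++ x` with `x` nonempty. -/
def IsCube {α : Type*} (w : List α) : Prop := ∃ x : List α, x ≠ [] ∧ w = x ++ x ++ x

/-- A weak square: a word of the form `a ++ x ++ x ++ a` with `a` a letter. -/
def IsWeakSq {α : Type*} (w : List α) : Prop :=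
  ∃ (a : α) (x : List α), w = a :: (x ++ x ++ [a])

/-- An overlap: a word of the form `a ++ x ++ a ++ x ++ a`. -/
def IsOverlap {α : Type*} (w : List α) : Prop :=
  ∃ (a : α) (x : List α), w = a :: (x ++ a :: x ++ [a])

def SqFree {α : Type*} (w : List α) : Prop := ∀ v, v <:+: w → ¬ IsSq v
def CubeFree {α : Type*} (w : List α) : Prop := ∀ v, v <:+: w → ¬ IsCube v
def WeakSqFree {α : Type*} (w : List α) : Prop := ∀ v, v <:+: w → ¬ IsWeakSq v
def OverlapFree {α : Type*} (w : List α) : Prop := ∀ v, v <:+: w → ¬ IsOverlap v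

/-- Applying the morphism determined by letter images `φ` to a finite word. -/
def applyM {α : Type*} (φ : α → List α) (w : List α) : List α := (w.map φ).flatten

def phi : Fin 3 → List (Fin 3) := ![[0,1,2,1,0], [1,2,0,2,1], [2,0,1,0,2]]

section

variable {α : Type*}

theorem CubeFree.infix {w u : List α} (hw : CubeFree w) (hu : u <:+: w) : CubeFree u :=
  fun v hv => hw v (hv.trans hu)

theorem isCube_iff_take {v : List α} :
    IsCube v ↔ v ≠ [] ∧
      v = v.take (v.length / 3) ++ v.take (v.length / 3) ++ v.take (v.length / 3) := by
  constructor
  · rintro ⟨x, hx, rfl⟩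
    have hlen : (x ++ x ++ x).length / 3 = x.length := by simp; omega
    rw [hlen]
    simp [hx]
  · rintro ⟨hv, h⟩
    refine ⟨_, fun hx => hv ?_, h⟩
    rw [h, hx]
    rfl

theorem cubeFree_iff_forall_mem_tails {w : List α} :
    CubeFree w ↔ ∀ t ∈ w.tails, ∀ v ∈ t.inits, ¬ IsCube v := by
  simp only [CubeFree, List.mem_tails, List.mem_inits, List.infix_iff_prefix_suffix]
  grind

instance [DecidableEq α] : DecidablePred (IsCube : List α → Prop) :=
  fun _ => decidable_of_iff _ isCube_iff_take.symm

instance [DecidableEq α] : DecidablePred (CubeFree : List α → Prop) :=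
  fun _ => decidable_of_iff _ cubeFree_iff_forall_mem_tails.symm

/-- The factor `(w.drop k).take (3 * n)` of `w` is a cube of period `n`. -/
def IsCubeAt (w : List α) (k n : ℕ) : Prop :=
  0 < n ∧ k + 3 * n ≤ w.length ∧ ∀ i < 2 * n, w[k + i]? = w[k + i + n]?

theorem isCube_iff_isCubeAt_zero {v : List α} :
    IsCube v ↔ ∃ n, v.length = 3 * n ∧ IsCubeAt v 0 n := by
  constructor
  · rintro ⟨x, hx, rfl⟩
    refine ⟨x.length, by simp; omega, List.length_pos_iff.2 hx, by simp; omega, fun i hi => ?_⟩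
    have hleft : (x ++ x ++ x)[i]? = (x ++ x)[i]? :=
      List.getElem?_append_left (by simp; omega)
    have hright : (x ++ (x ++ x))[i + x.length]? = (x ++ x)[i]? := by
      rw [List.getElem?_append_right (by omega), Nat.add_sub_cancel]
    rw [zero_add, hleft, ← hright, List.append_assoc]
  · rintro ⟨n, hlen, hn, -, hper⟩
    have hshift : v.drop n = v.take (2 * n) := List.ext_getElem? fun i => by
      rw [List.getElem?_drop, List.getElem?_take]
      split_ifs with hi
      · rw [add_comm, ← zero_add i, hper i hi]
      · exact List.getElem?_eq_none (by omega)
    have hsecond : (v.drop n).take n = v.take n := by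
      rw [hshift, List.take_take, min_eq_left (by omega)]
    refine ⟨v.take n, fun h => by simpa [hlen, hn.ne'] using congrArg List.length h, ?_⟩
    calc v = v.take n ++ v.drop n := (List.take_append_drop n v).symm
      _ = v.take n ++ v.take n ++ v.take n := by
        rw [hshift, two_mul, List.take_add, hsecond, List.append_assoc]

theorem IsCube.exists_isCubeAt_of_infix {v w : List α} (hc : IsCube v) (hv : v <:+: w) :
    ∃ k n, v.length = 3 * n ∧ IsCubeAt w k n := by
  obtain ⟨n, hlen, hn, -, hper⟩ := isCube_iff_isCubeAt_zero.1 hc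
  obtain ⟨k, hk, hvw⟩ := List.infix_iff_getElem?.1 hv
  have hat : ∀ i < v.length, w[k + i]? = v[i]? := fun i hi => by
    rw [add_comm, hvw i hi, List.getElem?_eq_getElem hi]
  refine ⟨k, n, hlen, hn, by omega, fun i hi => ?_⟩
  rw [hat i (by omega), add_assoc, hat (i + n) (by omega), ← zero_add i, hper i hi]

theorem IsCubeAt.not_cubeFree {w : List α} {k n : ℕ} (h : IsCubeAt w k n) : ¬ CubeFree w := by
  obtain ⟨hn, hk, hper⟩ := h
  have hcube : IsCube ((w.drop k).take (3 * n)) := by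
    refine isCube_iff_isCubeAt_zero.2 ⟨n, by simp; omega, hn, by simp; omega, fun i hi => ?_⟩
    simp only [List.getElem?_take, List.getElem?_drop, zero_add]
    rw [if_pos (by omega), if_pos (by omega), ← add_assoc, hper i hi]
  exact fun hw => hw _ ((List.take_prefix _ _).isInfix.trans (List.drop_suffix _ _).isInfix) hcube

section UniformMorphism

variable {φ : α → List α} {L : ℕ}

@[simp]
theorem applyM_nil : applyM φ [] = [] := rfl

@[simp]
theorem applyM_cons (a : α) (w : List α) : applyM φ (a :: w) = φ a ++ applyM φ w := rfl

theorem length_applyM (hφ : ∀ a, (φ a).length = L) (w : List α) :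
    (applyM φ w).length = L * w.length := by
  induction w with
  | nil => simp
  | cons a w ih => simp [ih, hφ]; ring

theorem applyM_drop (hφ : ∀ a, (φ a).length = L) (w : List α) (q : ℕ) :
    applyM φ (w.drop q) = (applyM φ w).drop (L * q) := by
  induction w generalizing q with
  | nil => simp
  | cons a w ih =>
    cases q with
    | zero => simp
    | succ q => rw [List.drop_succ_cons, ih, applyM_cons, mul_add, mul_one, add_comm,
        ← List.drop_drop, List.drop_left' (hφ a)]

theorem applyM_take (hφ : ∀ a, (φ a).length = L) (w : List α) (q : ℕ) :
    applyM φ (w.take q) = (applyM φ w).take (L * q) := by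
  induction w generalizing q with
  | nil => simp
  | cons a w ih =>
    cases q with
    | zero => simp
    | succ q => rw [List.take_succ_cons, applyM_cons, applyM_cons, ih, mul_add, mul_one,
        add_comm, List.take_append, hφ, Nat.add_sub_cancel_left,
        List.take_of_length_le (l := φ a) (by rw [hφ]; omega)]

theorem getElem?_applyM (hφ : ∀ a, (φ a).length = L) (w : List α) (q : ℕ) {r : ℕ}
    (hr : r < L) :
    (applyM φ w)[L * q + r]? = w[q]?.bind fun a => (φ a)[r]? := by
  rw [← List.getElem?_drop, ← applyM_drop hφ]
  cases h : w.drop q with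
  | nil => simp [List.drop_eq_nil_iff.1 h]
  | cons a u =>
    rw [show w[q]? = (w.drop q)[0]? by simp, h, applyM_cons,
      List.getElem?_append_left (by rw [hφ]; exact hr)]
    rfl

theorem take_drop_applyM (hφ : ∀ a, (φ a).length = L) {w : List α} {q : ℕ}
    (hq : q < w.length) :
    ((applyM φ w).drop (L * q)).take L = φ w[q] := by
  rw [← applyM_drop hφ, List.drop_eq_getElem_cons hq, applyM_cons, List.take_left' (hφ _)]

def IsSynchronizing (φ : α → List α) (L : ℕ) : Prop :=
  ∀ a b c, ∀ r < L, 0 < r → ((φ b ++ φ c).drop r).take L ≠ φ a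

theorem IsSynchronizing.dvd_of_take_drop_applyM (hsync : IsSynchronizing φ L)
    (hφ : ∀ a, (φ a).length = L) (hL : 0 < L) {w : List α} {k : ℕ} {a : α}
    (h : ((applyM φ w).drop k).take L = φ a) : L ∣ k := by
  have hqr : L * (k / L) + k % L = k := Nat.div_add_mod k L
  have hr : k % L < L := Nat.mod_lt k hL
  refine Nat.dvd_of_mod_eq_zero (Nat.eq_zero_of_not_pos fun hr0 => ?_)
  rw [← hqr, ← List.drop_drop, ← applyM_drop hφ] at h
  have hlen := congrArg List.length h
  generalize w.drop (k / L) = u at h hlen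
  rcases u with _ | ⟨b, _ | ⟨c, u⟩⟩
  · simp [hφ] at hlen; omega
  · simp [hφ] at hlen; omega
  · rw [applyM_cons, applyM_cons, ← List.append_assoc, List.drop_append_of_le_length
      (by simp [hφ]; omega), List.take_append_of_le_length (by simp [hφ]; omega)] at h
    exact hsync a b c _ hr hr0 h

theorem pos_of_isCubeAt_applyM (hφ : ∀ a, (φ a).length = L) {w : List α} {k n : ℕ}
    (h : IsCubeAt (applyM φ w) k n) : 0 < L := by
  obtain ⟨hn, hk, -⟩ := h
  rw [length_applyM hφ] at hk
  exact Nat.pos_of_ne_zero fun hL => by simp [hL] at hk; omega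

theorem IsSynchronizing.dvd_of_isCubeAt_applyM (hsync : IsSynchronizing φ L)
    (hφ : ∀ a, (φ a).length = L) {w : List α} {k n : ℕ} (h : IsCubeAt (applyM φ w) k n)
    (hLn : L ≤ n) : L ∣ n := by
  have hL := pos_of_isCubeAt_applyM hφ h
  obtain ⟨hn, hk, hper⟩ := h
  rw [length_applyM hφ] at hk
  have hq : k < L * (k / L + 1) := Nat.lt_mul_div_succ k hL
  have hq' : L * (k / L + 1) + L ≤ k + 2 * n := by
    have := Nat.div_add_mod k L
    have := Nat.mod_lt k hL
    lia
  have hqw : k / L + 1 < w.length := Nat.lt_of_mul_lt_mul_left (a := L) (by omega)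
  have hblock : ((applyM φ w).drop (L * (k / L + 1) + n)).take L = φ w[k / L + 1] := by
    rw [← take_drop_applyM hφ hqw]
    refine List.ext_getElem? fun j => ?_
    simp only [List.getElem?_take, List.getElem?_drop]
    split_ifs with hj
    · have := hper (L * (k / L + 1) + j - k) (by omega)
      rw [show k + (L * (k / L + 1) + j - k) = L * (k / L + 1) + j by omega] at this
      rw [this, add_right_comm]
    · rfl
  exact (Nat.dvd_add_right (dvd_mul_right L _)).1 (hsync.dvd_of_take_drop_applyM hφ hL hblock)

theorem isCubeAt_of_isCubeAt_applyM (hφ : ∀ a, (φ a).length = L)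
    (hlast : Function.Injective fun a => (φ a).getLast?) {w : List α} {k m : ℕ}
    (h : IsCubeAt (applyM φ w) k (L * m)) : IsCubeAt w (k / L) m := by
  have hL := pos_of_isCubeAt_applyM hφ h
  obtain ⟨hn, hk, hper⟩ := h
  rw [length_applyM hφ] at hk
  have hqr : L * (k / L) + k % L = k := Nat.div_add_mod k L
  have hr : k % L < L := Nat.mod_lt k hL
  have hget : ∀ a, (φ a).getLast? = (φ a)[L - 1]? := fun a => by
    rw [List.getLast?_eq_getElem?, hφ]
  refine ⟨Nat.pos_of_mul_pos_left hn,
    Nat.le_of_mul_le_mul_left (show L * (k / L + 3 * m) ≤ L * w.length by lia) hL,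
    fun u hu => ?_⟩
  have hLu : L * u + L ≤ 2 * (L * m) := by
    calc L * u + L = L * (u + 1) := by ring
      _ ≤ L * (2 * m) := Nat.mul_le_mul_left _ hu
      _ = 2 * (L * m) := by ring
  have hum : k / L + u + m < w.length := Nat.lt_of_mul_lt_mul_left (a := L) (by lia)
  have hlast_eq := hper (L * (k / L + u) + (L - 1) - k) (by lia)
  rw [show k + (L * (k / L + u) + (L - 1) - k) = L * (k / L + u) + (L - 1) by lia,
    show L * (k / L + u) + (L - 1) + L * m = L * (k / L + u + m) + (L - 1) by lia,
    getElem?_applyM hφ _ _ (by omega), getElem?_applyM hφ _ _ (by omega),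
    List.getElem?_eq_getElem (by omega), List.getElem?_eq_getElem hum] at hlast_eq
  rw [List.getElem?_eq_getElem (by omega), List.getElem?_eq_getElem hum]
  simp only [Option.bind_some, ← hget] at hlast_eq
  exact congrArg some (hlast hlast_eq)

theorem CubeFree.lt_of_isCubeAt_applyM {w : List α} (hw : CubeFree w)
    (hφ : ∀ a, (φ a).length = L) (hsync : IsSynchronizing φ L)
    (hlast : Function.Injective fun a => (φ a).getLast?) {k n : ℕ}
    (h : IsCubeAt (applyM φ w) k n) : n < L := by
  by_contra! hLn
  obtain ⟨m, rfl⟩ := hsync.dvd_of_isCubeAt_applyM hφ h hLn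
  exact (isCubeAt_of_isCubeAt_applyM hφ hlast h).not_cubeFree hw

theorem exists_infix_applyM_of_infix (hφ : ∀ a, (φ a).length = L) (hL : 0 < L) {v w : List α}
    (hv : v <:+: applyM φ w) :
    ∃ u, u <:+: w ∧ L * u.length < v.length + 2 * L ∧ v <:+: applyM φ u := by
  obtain ⟨k, hk, hvk⟩ := List.infix_iff_getElem?.1 hv
  set q := k / L
  set r := k % L
  set c := (r + v.length) / L + 1
  have hqr : L * q + r = k := Nat.div_add_mod k L
  have hr : r < L := Nat.mod_lt k hL
  have hc : r + v.length < L * c ∧ L * c ≤ r + v.length + L := by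
    have := Nat.div_add_mod (r + v.length) L
    have := Nat.mod_lt (r + v.length) hL
    rw [mul_add, mul_one]
    omega
  have hAlen := length_applyM hφ w
  refine ⟨(w.drop q).take c, (List.take_prefix _ _).isInfix.trans (List.drop_suffix _ _).isInfix,
    ?_, ?_⟩
  · calc L * ((w.drop q).take c).length ≤ L * c :=
          Nat.mul_le_mul_left L (List.length_take_le _ _)
      _ < v.length + 2 * L := by omega
  · rw [applyM_take hφ, applyM_drop hφ]
    refine List.infix_iff_getElem?.2 ⟨r, ?_, fun i hi => ?_⟩
    · simp only [List.length_take, List.length_drop]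
      omega
    · rw [List.getElem?_take, if_pos (by omega), List.getElem?_drop, ← hvk i hi]
      congr 1
      omega

end UniformMorphism

end

theorem phi_length (a : Fin 3) : (phi a).length = 5 := by
  fin_cases a <;> rfl

theorem phi_isSynchronizing : IsSynchronizing phi 5 := by
  unfold IsSynchronizing
  decide

theorem phi_getLast?_injective : Function.Injective fun a => (phi a).getLast? := by
  decide

theorem cubeFree_applyM_phi_of_length_le {u : List (Fin 3)} (hu : u.length ≤ 4)
    (hcf : CubeFree u) : CubeFree (applyM phi u) := by
  have hcheck : ∀ k < 5, ∀ f : Fin k → Fin 3,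
      CubeFree (List.ofFn f) → CubeFree (applyM phi (List.ofFn f)) := by
    decide +kernel
  rw [← List.ofFn_getElem (xs := u)] at hcf ⊢
  exact hcheck _ (by omega) _ hcf

theorem stmt2 : ∀ W : List (Fin 3), CubeFree W → CubeFree (applyM phi W) := by
  intro W hW v hv hcube
  obtain ⟨k, n, hvn, hkn⟩ := hcube.exists_isCubeAt_of_infix hv
  have hn : n < 5 :=
    hW.lt_of_isCubeAt_applyM phi_length phi_isSynchronizing phi_getLast?_injective hkn
  obtain ⟨u, hu, hlen, hvu⟩ := exists_infix_applyM_of_infix phi_length (by norm_num) hv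
  exact cubeFree_applyM_phi_of_length_le (by omega) (hW.infix hu) v hvu hcube
end

section
/- If φ is an overlap-free morphism over a ternary alphabet, then the first letters of the images of the three letters are pairwise distinct, and likewise the last letters of the images of the three letters are pairwise distinct. -/
/-!
If `φ a` and `φ b` (with `a ≠ b`) both start with the letter `c`, say `φ a = c u` and
`φ b = c v`, then the image `c v c u c u c v` of the overlap-free word `baab` contains the
overlap `c u c u c`. Symmetrically, if `φ a = u c` and `φ b = v c`, then the image
`v c u c u c v c` contains the same overlap.
-/

section

variable {α : Type*}

theorem overlapFree_baab {a b : α} (hab : a ≠ b) : OverlapFree [b, a, a, b] := by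
  rintro v hv ⟨c, x, rfl⟩
  -- an overlap of length at most 4 is a cube `ccc`
  obtain rfl : x = [] := by
    have := hv.length_le
    simp only [List.length_cons, List.length_append] at this
    exact List.eq_nil_of_length_eq_zero (by omega)
  simp [List.infix_cons_iff, List.cons_prefix_cons] at hv
  grind

theorem not_overlapFree_applyM_baab_of_headI_eq [Inhabited α] {φ : α → List α} {a b : α}
    (ha : φ a ≠ []) (hb : φ b ≠ []) (h : (φ a).headI = (φ b).headI) :
    ¬ OverlapFree (applyM φ [b, a, a, b]) := by
  obtain ⟨c, u, hu⟩ := List.exists_cons_of_ne_nil ha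
  obtain ⟨c', v, hv⟩ := List.exists_cons_of_ne_nil hb
  obtain rfl : c = c' := by simpa [hu, hv] using h
  refine fun hfree ↦ hfree _ ⟨c :: v, v, ?_⟩ ⟨c, u, rfl⟩
  simp [applyM, hu, hv]

theorem not_overlapFree_applyM_baab_of_getLastI_eq [Inhabited α] {φ : α → List α} {a b : α}
    (ha : φ a ≠ []) (hb : φ b ≠ []) (h : (φ a).getLastI = (φ b).getLastI) :
    ¬ OverlapFree (applyM φ [b, a, a, b]) := by
  obtain ⟨u, c, hu⟩ := (List.eq_nil_or_concat (φ a)).resolve_left ha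
  obtain ⟨v, c', hv⟩ := (List.eq_nil_or_concat (φ b)).resolve_left hb
  obtain rfl : c = c' := by simpa [hu, hv, List.getLastI_eq_getLast?_getD] using h
  refine fun hfree ↦ hfree _ ⟨v, v ++ [c], ?_⟩ ⟨c, u, rfl⟩
  simp [applyM, hu, hv]

end

theorem stmt9 (φ : Fin 3 → List (Fin 3)) (hne : ∀ a, φ a ≠ [])
    (hof : ∀ W, OverlapFree W → OverlapFree (applyM φ W)) :
    (∀ a b : Fin 3, a ≠ b → (φ a).headI ≠ (φ b).headI) ∧
    (∀ a b : Fin 3, a ≠ b → (φ a).getLastI ≠ (φ b).getLastI) :=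
  ⟨fun a b hab h ↦ not_overlapFree_applyM_baab_of_headI_eq (hne a) (hne b) h
      (hof _ (overlapFree_baab hab)),
    fun a b hab h ↦ not_overlapFree_applyM_baab_of_getLastI_eq (hne a) (hne b) h
      (hof _ (overlapFree_baab hab))⟩
end

section
/- If φ is a morphism over a ternary alphabet that is weakly squarefree, cubefree and overlap-free, with nonempty letter images and with each letter's image beginning with a distinct first letter, then for every letter a the first letter of φ(a) equals the last letter of φ(a). -/
/-!
Let `l` be the last letter of `φ a`. Since the first letters of the three images are distinct,
some `φ b` begins with `l`, and `b ≠ a` unless `φ a` begins with `l`. The word `ab` is weakly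
squarefree, but its image `φ a φ b` contains `ll`, the weak square with empty middle.
-/

theorem weakSqFree_pair {α : Type*} {a b : α} (hab : a ≠ b) : WeakSqFree [a, b] := by
  rintro v ⟨s, t, hst⟩ ⟨c, x, rfl⟩
  have hlen := congrArg List.length hst
  simp only [List.length_append, List.length_cons, List.length_nil] at hlen
  obtain ⟨rfl, rfl, rfl⟩ : x = [] ∧ s = [] ∧ t = [] := by
    simp only [← List.length_eq_zero_iff]; omega
  simp only [List.nil_append, List.append_nil, List.cons.injEq, and_true] at hst
  exact hab (hst.1.symm.trans hst.2)

theorem WeakSqFree.ne_of_pair_infix {α : Type*} {w : List α} {c d : α} (hw : WeakSqFree w)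
    (hcd : [c, d] <:+: w) : c ≠ d := by
  rintro rfl
  exact hw [c, c] hcd ⟨c, [], rfl⟩

theorem pair_getLastI_headI_infix_applyM {α : Type*} [Inhabited α] (φ : α → List α) {a b : α}
    (ha : φ a ≠ []) (hb : φ b ≠ []) :
    [(φ a).getLastI, (φ b).headI] <:+: applyM φ [a, b] := by
  obtain ⟨u, c, hu⟩ := (φ a).eq_nil_or_concat'.resolve_left ha
  obtain ⟨y, ys, hy⟩ := List.exists_cons_of_ne_nil hb
  refine ⟨u, ys, ?_⟩
  simp [applyM, hu, hy, List.getLastI_eq_getLast?_getD]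

theorem stmt10_general (φ : Fin 3 → List (Fin 3)) (hne : ∀ a, φ a ≠ [])
    (hwsf : ∀ W, WeakSqFree W → WeakSqFree (applyM φ W))
    (hfirst : ∀ a b : Fin 3, a ≠ b → (φ a).headI ≠ (φ b).headI) :
    ∀ a : Fin 3, (φ a).headI = (φ a).getLastI := by
  intro a
  by_contra hfl
  have hinj : Function.Injective fun c => (φ c).headI := fun x y hxy =>
    not_not.mp fun hxy' => hfirst x y hxy' hxy
  obtain ⟨b, hb⟩ := Finite.surjective_of_injective hinj (φ a).getLastI
  have hba : b ≠ a := by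
    rintro rfl
    exact hfl hb
  have himg := hwsf [a, b] (weakSqFree_pair hba.symm)
  exact himg.ne_of_pair_infix (pair_getLastI_headI_infix_applyM φ (hne a) (hne b)) hb.symm

theorem stmt10 (φ : Fin 3 → List (Fin 3)) (hne : ∀ a, φ a ≠ [])
    (hwsf : ∀ W, WeakSqFree W → WeakSqFree (applyM φ W))
    (hcf : ∀ W, CubeFree W → CubeFree (applyM φ W))
    (hof : ∀ W, OverlapFree W → OverlapFree (applyM φ W))
    (hfirst : ∀ a b : Fin 3, a ≠ b → (φ a).headI ≠ (φ b).headI) :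
    ∀ a : Fin 3, (φ a).headI = (φ a).getLastI :=
  stmt10_general φ hne hwsf hfirst
end

section
/- There is no 2-uniform overlap-free morphism over the ternary alphabet {1,2,3}. -/
/-!
Write a 2-uniform morphism as `φ a = [f a, g a]`. The overlap-free words `0011`, `0022`, `1122`
already force `f a ≠ g a` and make `f` and `g` injective (otherwise `φ (aabb)` contains
`xxx`, `xyxyx` or `yxyxy`); the twelve morphisms that survive send `0120` or `0210` to a word
with an overlap. Both facts are a finite check over the `3 ^ 6` pairs `(f, g)`.
-/

section Decidability

variable {α : Type*}

theorem not_isOverlap_nil : ¬ IsOverlap ([] : List α) := by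
  rintro ⟨_, _, h⟩
  cases h

/-- In an overlap `a :: (x ++ a :: x ++ [a])` the block `x` is determined by the length. -/
theorem isOverlap_cons_iff {a : α} {t : List α} :
    IsOverlap (a :: t) ↔
      t = t.take ((t.length - 2) / 2) ++ a :: t.take ((t.length - 2) / 2) ++ [a] := by
  constructor
  · rintro ⟨b, x, h⟩
    obtain ⟨rfl, rfl⟩ := List.cons_eq_cons.1 h
    have hx : ((x ++ a :: x ++ [a]).length - 2) / 2 = x.length := by
      simp only [List.length_append, List.length_cons, List.length_nil]
      omega
    rw [hx, List.append_assoc, List.take_left]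
    simp
  · exact fun h => ⟨a, _, congrArg (a :: ·) h⟩

instance [DecidableEq α] : DecidablePred (IsOverlap (α := α))
  | [] => isFalse not_isOverlap_nil
  | _ :: _ => decidable_of_iff' _ isOverlap_cons_iff

theorem overlapFree_iff_forall_mem_tails_inits {w : List α} :
    OverlapFree w ↔ ∀ t ∈ w.tails, ∀ v ∈ t.inits, ¬ IsOverlap v := by
  simp only [OverlapFree, List.infix_iff_prefix_suffix, List.mem_tails, List.mem_inits]
  exact ⟨fun h t ht v hv => h v ⟨t, hv, ht⟩, fun h v ⟨t, hv, ht⟩ => h t ht v hv⟩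

instance [DecidableEq α] : DecidablePred (OverlapFree (α := α)) :=
  fun _ => decidable_of_iff' _ overlapFree_iff_forall_mem_tails_inits

end Decidability

def ternaryTestWords : List (List (Fin 3)) :=
  [[0, 0, 1, 1], [0, 0, 2, 2], [1, 1, 2, 2], [0, 1, 2, 0], [0, 2, 1, 0]]

theorem overlapFree_of_mem_ternaryTestWords : ∀ W ∈ ternaryTestWords, OverlapFree W := by
  decide

theorem exists_mem_ternaryTestWords_not_overlapFree_applyM :
    ∀ f g : Fin 3 → Fin 3,
      ∃ W ∈ ternaryTestWords, ¬ OverlapFree (applyM (fun a => [f a, g a]) W) := by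
  decide

theorem stmt11 : ¬ ∃ φ : Fin 3 → List (Fin 3),
    (∀ a, (φ a).length = 2) ∧
    (∀ W, OverlapFree W → OverlapFree (applyM φ W)) := by
  rintro ⟨φ, hlen, hφ⟩
  choose f g hfg using fun a => List.length_eq_two.1 (hlen a)
  obtain rfl : φ = fun a => [f a, g a] := funext hfg
  obtain ⟨W, hW, hbad⟩ := exists_mem_ternaryTestWords_not_overlapFree_applyM f g
  exact hbad (hφ W (overlapFree_of_mem_ternaryTestWords W hW))
end

section
/- There is no 4-uniform morphism over the ternary alphabet {1,2,3} that is simultaneously weakly squarefree, cubefree, overlap-free and has a fixed point. -/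
/-!
Since `φ [i] = φ i`, every image `φ i` is a weakly squarefree word of length 4, and for `i ≠ j`
the word `φ i ++ φ j ++ φ i = φ [i, j, i]` is weakly squarefree and overlap-free. A finite search
shows that no three weakly squarefree ternary words of length 4 are pairwise related in this way:
the symmetric relation `u ~ v` (both `u v u` and `v u v` free) is a 6-cycle plus isolated edges.
-/

section

variable {α : Type*}

theorem forall_infix_iff_tails_inits {P : List α → Prop} {w : List α} :
    (∀ v, v <:+: w → P v) ↔ ∀ t ∈ w.tails, ∀ v ∈ t.inits, P v := by
  simp only [List.mem_tails, List.mem_inits]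
  exact ⟨fun h t ht v hv => h v (hv.isInfix.trans ht.isInfix),
    fun h v hv => let ⟨t, hvt, htw⟩ := List.infix_iff_prefix_suffix.1 hv; h t htw v hvt⟩

-- The block `x` is determined by the length of `w`, so only one candidate needs to be tested.
theorem isWeakSq_iff {w : List α} : IsWeakSq w ↔
    ∃ a ∈ w.head?, let x := w.tail.take ((w.length - 2) / 2); w = a :: (x ++ x ++ [a]) := by
  refine ⟨?_, fun ⟨a, _, h⟩ => ⟨a, _, h⟩⟩
  rintro ⟨a, x, rfl⟩
  have hn : ((a :: (x ++ x ++ [a])).length - 2) / 2 = x.length := by simp; omega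
  refine ⟨a, rfl, ?_⟩
  rw [hn]
  simp only [List.tail_cons, List.append_assoc, List.take_left']

theorem isOverlap_iff {w : List α} : IsOverlap w ↔
    ∃ a ∈ w.head?, let x := w.tail.take ((w.length - 3) / 2); w = a :: (x ++ a :: x ++ [a]) := by
  refine ⟨?_, fun ⟨a, _, h⟩ => ⟨a, _, h⟩⟩
  rintro ⟨a, x, rfl⟩
  have hn : ((a :: (x ++ a :: x ++ [a])).length - 3) / 2 = x.length := by simp; omega
  refine ⟨a, rfl, ?_⟩
  rw [hn]
  simp only [List.tail_cons, List.append_assoc, List.take_left']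

theorem mem_sections_replicate {l w : List α} {n : ℕ} :
    w ∈ (List.replicate n l).sections ↔ w.length = n ∧ ∀ a ∈ w, a ∈ l := by
  rw [List.mem_sections]
  induction w generalizing n with
  | nil => cases n <;> simp
  | cons a w ih => cases n <;> simp [List.replicate_succ, ih, and_left_comm]

def SandwichFree (u v : List α) : Prop :=
  WeakSqFree (u ++ v ++ u) ∧ OverlapFree (u ++ v ++ u)

@[simp]
theorem applyM_singleton (φ : α → List α) (a : α) : applyM φ [a] = φ a := by
  simp [applyM]

theorem applyM_append (φ : α → List α) (u v : List α) :
    applyM φ (u ++ v) = applyM φ u ++ applyM φ v := by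
  simp [applyM]

theorem SandwichFree.applyM {φ : α → List α} {u v : List α} (h : SandwichFree u v)
    (hW : ∀ W, WeakSqFree W → WeakSqFree (applyM φ W))
    (hO : ∀ W, OverlapFree W → OverlapFree (applyM φ W)) :
    SandwichFree (applyM φ u) (applyM φ v) := by
  simpa only [SandwichFree, applyM_append] using And.intro (hW _ h.1) (hO _ h.2)

variable [DecidableEq α]

instance (w : List α) : Decidable (IsWeakSq w) := decidable_of_iff _ isWeakSq_iff.symm
instance (w : List α) : Decidable (IsOverlap w) := decidable_of_iff _ isOverlap_iff.symm
instance (w : List α) : Decidable (WeakSqFree w) :=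
  decidable_of_iff _ forall_infix_iff_tails_inits.symm
instance (w : List α) : Decidable (OverlapFree w) :=
  decidable_of_iff _ forall_infix_iff_tails_inits.symm

instance (u v : List α) : Decidable (SandwichFree u v) :=
  inferInstanceAs (Decidable (_ ∧ _))

end

def weakSqFreeWords (k n : ℕ) : List (List (Fin k)) :=
  (List.replicate n (List.finRange k)).sections.filter fun w => decide (WeakSqFree w)

theorem mem_weakSqFreeWords {k n : ℕ} {w : List (Fin k)} :
    w ∈ weakSqFreeWords k n ↔ w.length = n ∧ WeakSqFree w := by
  simp [weakSqFreeWords, mem_sections_replicate]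

theorem no_sandwichFree_triangle : ∀ u ∈ weakSqFreeWords 3 4, ∀ v ∈ weakSqFreeWords 3 4,
    SandwichFree u v → SandwichFree v u → ∀ w ∈ weakSqFreeWords 3 4,
    SandwichFree u w → SandwichFree w u → SandwichFree v w → SandwichFree w v → False := by
  decide +kernel

theorem sandwichFree_singleton {i j : Fin 3} (h : i ≠ j) : SandwichFree [i] [j] := by
  revert i j
  decide

theorem stmt13 : ¬ ∃ φ : Fin 3 → List (Fin 3),
    (∀ a, (φ a).length = 4) ∧
    (∀ W, WeakSqFree W → WeakSqFree (applyM φ W)) ∧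
    (∀ W, CubeFree W → CubeFree (applyM φ W)) ∧
    (∀ W, OverlapFree W → OverlapFree (applyM φ W)) ∧
    (∃ (a : Fin 3) (V : List (Fin 3)), φ a = a :: V) := by
  rintro ⟨φ, hlen, hW, -, hO, -⟩
  have hmem (i : Fin 3) : φ i ∈ weakSqFreeWords 3 4 :=
    mem_weakSqFreeWords.2 ⟨hlen i, applyM_singleton φ i ▸ hW [i] (by decide +revert)⟩
  have hfree {i j : Fin 3} (hij : i ≠ j) : SandwichFree (φ i) (φ j) := by
    simpa using (sandwichFree_singleton hij).applyM hW hO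
  exact no_sandwichFree_triangle _ (hmem 0) _ (hmem 1) (hfree (by decide)) (hfree (by decide))
    _ (hmem 2) (hfree (by decide)) (hfree (by decide)) (hfree (by decide)) (hfree (by decide))
end

section
/- There is no morphism over the binary alphabet {0,1} that is weakly squarefree, cubefree, overlap-free, and has an infinite fixed point obtained by iterating from a letter (i.e., a morphism φ with |φ(a)| ≥ 2 and φ(a) starting with a for a letter a). -/
/-!
Over a binary alphabet a weakly squarefree word has no factor `cc`, so it alternates between
the two letters, and an alternating word of length six is the cube `(ab)³`. Hence a binary word
that is weakly squarefree and cubefree has length at most five. The word `ababa` is weakly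
squarefree and cubefree, so its image `φ(a)φ(b)φ(a)φ(b)φ(a)` must be too; but it contains three
copies of `φ(a)`, hence has length at least six once `|φ(a)| ≥ 2`.
-/

lemma WeakSqFree.ne_of_infix {α : Type*} {w : List α} (hw : WeakSqFree w) {a b : α}
    (hab : [a, b] <:+: w) : a ≠ b := by
  rintro rfl
  exact hw _ hab ⟨a, [], rfl⟩

lemma Fin.eq_of_ne_of_ne_two {a b c : Fin 2} (hab : a ≠ b) (hbc : b ≠ c) : a = c := by
  omega

lemma length_le_five_of_weakSqFree_of_cubeFree {w : List (Fin 2)} (hw : WeakSqFree w)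
    (hc : CubeFree w) : w.length ≤ 5 := by
  by_contra! hlen
  match w, hw, hc, hlen with
  | c₀ :: c₁ :: c₂ :: c₃ :: c₄ :: c₅ :: t, hw, hc, _ =>
    -- adjacent letters differ, so `c₂ = c₀`, `c₃ = c₁`, `c₄ = c₀`, `c₅ = c₁`
    obtain rfl := Fin.eq_of_ne_of_ne_two (hw.ne_of_infix ⟨[], [c₂, c₃, c₄, c₅] ++ t, rfl⟩)
      (hw.ne_of_infix ⟨[c₀], [c₃, c₄, c₅] ++ t, rfl⟩)
    obtain rfl := Fin.eq_of_ne_of_ne_two (hw.ne_of_infix ⟨[c₀], [c₃, c₄, c₅] ++ t, rfl⟩)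
      (hw.ne_of_infix ⟨[c₀, c₁], [c₄, c₅] ++ t, rfl⟩)
    obtain rfl := Fin.eq_of_ne_of_ne_two (hw.ne_of_infix ⟨[c₀, c₁], [c₄, c₅] ++ t, rfl⟩)
      (hw.ne_of_infix ⟨[c₀, c₁, c₀], [c₅] ++ t, rfl⟩)
    obtain rfl := Fin.eq_of_ne_of_ne_two (hw.ne_of_infix ⟨[c₀, c₁, c₀], [c₅] ++ t, rfl⟩)
      (hw.ne_of_infix ⟨[c₀, c₁, c₀, c₁], t, rfl⟩)
    exact hc _ ⟨[], t, rfl⟩ ⟨[c₀, c₁], List.cons_ne_nil _ _, rfl⟩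

lemma weakSqFree_alternating (a : Fin 2) : WeakSqFree [a, 1 - a, a, 1 - a, a] := by
  rintro v hv ⟨c, x, rfl⟩
  have hlen := hv.length_le
  simp only [List.length_cons, List.length_append, List.length_nil] at hlen
  rcases x with _ | ⟨d, _ | ⟨e, y⟩⟩
  · revert hv; decide +revert
  · revert hv; decide +revert
  · simp only [List.length_cons] at hlen; omega

lemma cubeFree_alternating (a : Fin 2) : CubeFree [a, 1 - a, a, 1 - a, a] := by
  rintro v hv ⟨x, hx, rfl⟩
  have hlen := hv.length_le
  simp only [List.length_cons, List.length_append, List.length_nil] at hlen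
  rcases x with _ | ⟨d, _ | ⟨e, y⟩⟩
  · exact hx rfl
  · revert hv; decide +revert
  · simp only [List.length_cons] at hlen; omega

lemma length_applyM_s15 {α : Type*} (φ : α → List α) (w : List α) :
    (applyM φ w).length = (w.map fun c => (φ c).length).sum := by
  simp [applyM, List.length_flatten, Function.comp_def]

theorem stmt15 : ¬ ∃ φ : Fin 2 → List (Fin 2),
    (∀ W, WeakSqFree W → WeakSqFree (applyM φ W)) ∧
    (∀ W, CubeFree W → CubeFree (applyM φ W)) ∧
    (∀ W, OverlapFree W → OverlapFree (applyM φ W)) ∧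
    (∃ (a : Fin 2) (V : List (Fin 2)), φ a = a :: V ∧ V ≠ []) := by
  rintro ⟨φ, hW, hC, -, a, V, hφa, hV⟩
  have hshort := length_le_five_of_weakSqFree_of_cubeFree
    (hW _ (weakSqFree_alternating a)) (hC _ (cubeFree_alternating a))
  have hlong : 2 ≤ (φ a).length := by
    simpa [hφa, Nat.one_le_iff_ne_zero] using hV
  simp only [length_applyM_s15, List.map_cons, List.map_nil, List.sum_cons, List.sum_nil] at hshort
  omega
end

section
/- Let φ be a uniform squarefree morphism over the ternary alphabet {1,2,3} that is cyclic, i.e., φ(p⊕1) = φ(p)⊕1 for all letters p, where ⊕1 is the cyclic successor 1↦2↦3↦1 applied letterwise. Then for every letter a, the first letter of φ(a) equals the last letter of φ(a). -/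
/-!
A squarefree morphism maps the squarefree word `a b` (for letters `a ≠ b`) to the squarefree
word `φ(a) φ(b)`, so the last letter of `φ(a)` differs from the first letter of `φ(b)`.
By cyclicity the first letters of `φ(a)`, `φ(a ⊕ 1)`, `φ(a ⊕ 2)` are `f`, `f ⊕ 1`, `f ⊕ 2` for
`f` the first letter of `φ(a)`, so the last letter of `φ(a)` avoids `f ⊕ 1` and `f ⊕ 2`,
leaving only `f`.
-/

section SqFree

variable {α : Type*}

theorem sqFree_pair {a b : α} (hab : a ≠ b) : SqFree [a, b] := by
  rintro v hv ⟨x, hx, rfl⟩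
  match x, hx with
  | [c], _ =>
    have hcc : [c, c] = [a, b] := hv.sublist.eq_of_length rfl
    simp only [List.cons.injEq, and_true] at hcc
    exact hab (hcc.1.symm.trans hcc.2)
  | _ :: _ :: _, _ => simpa using hv.length_le

theorem getLastI_ne_headI_of_sqFree_append [Inhabited α] {u v : List α} (h : SqFree (u ++ v))
    (hu : u ≠ []) (hv : v ≠ []) : u.getLastI ≠ v.headI := by
  intro heq
  obtain ⟨b, t, rfl⟩ := List.exists_cons_of_ne_nil hv
  have hjunction : [u.getLastI, b] <:+: u ++ b :: t := by
    refine ⟨u.dropLast, t, ?_⟩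
    conv_rhs => rw [← List.dropLast_append_getLast hu]
    rw [List.getLastI_eq_getLast?_getD, List.getLast?_eq_some_getLast hu]
    simp
  exact h _ hjunction ⟨[b], List.cons_ne_nil _ _, by simpa using heq⟩

end SqFree

theorem List.headI_map {α β : Type*} [Inhabited α] [Inhabited β] (f : α → β) {l : List α}
    (hl : l ≠ []) : (l.map f).headI = f l.headI := by
  obtain ⟨x, xs, rfl⟩ := List.exists_cons_of_ne_nil hl
  rfl

theorem applyM_pair {α : Type*} (φ : α → List α) (a b : α) :
    applyM φ [a, b] = φ a ++ φ b := by
  simp [applyM]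

theorem Fin.eq_of_ne_add_one_of_ne_add_two (x y : Fin 3) (h₁ : y ≠ x + 1) (h₂ : y ≠ x + 2) :
    x = y := by
  revert x y
  decide

/-- The cyclic successor 1→2→3→1 on the ternary alphabet is `(· + 1)` on `Fin 3`. -/
theorem stmt16 (φ : Fin 3 → List (Fin 3)) (L : ℕ) (hL : 1 ≤ L)
    (hunif : ∀ a, (φ a).length = L)
    (hcyc : ∀ p : Fin 3, φ (p + 1) = (φ p).map (· + 1))
    (hsf : ∀ W, SqFree W → SqFree (applyM φ W)) :
    ∀ a : Fin 3, (φ a).headI = (φ a).getLastI := by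
  have hne : ∀ a, φ a ≠ [] := fun a => List.ne_nil_of_length_pos (hunif a ▸ hL)
  have hjunction : ∀ a b, a ≠ b → (φ a).getLastI ≠ (φ b).headI := fun a b hab =>
    getLastI_ne_headI_of_sqFree_append (applyM_pair φ a b ▸ hsf _ (sqFree_pair hab))
      (hne a) (hne b)
  have hhead : ∀ a, (φ (a + 1)).headI = (φ a).headI + 1 := fun a => by
    rw [hcyc, List.headI_map _ (hne a)]
  intro a
  apply Fin.eq_of_ne_add_one_of_ne_add_two
  · rw [← hhead]
    exact hjunction _ _ (by revert a; decide)
  · rw [show (2 : Fin 3) = 1 + 1 from rfl, ← add_assoc, ← hhead, ← hhead]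
    exact hjunction _ _ (by revert a; decide)
end

section
/- Every squarefree word over the ternary alphabet {a,b,c} of length greater than 13 contains all six two-letter factors of distinct letters: ab, ac, ba, bc, ca, cb. Moreover, there exists a squarefree word of length 13 (namely bcbacbcacbaca) avoiding the factor ab. -/
/-!
Every squarefree word of length `n` is built from the empty word by prepending `n` letters, and
each intermediate word, being a suffix, is squarefree; so a branch of this enumeration can be
pruned as soon as it has a square prefix. Running it for `n = 14` over three letters shows by
computation that every squarefree ternary word of length 14 contains all six factors `uv` with
`u ≠ v`, and a longer squarefree word contains its squarefree suffix of length 14.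
-/

variable {α : Type*}

def HasSqPrefix (w : List α) : Prop := ∃ x : List α, x ≠ [] ∧ x ++ x <+: w

theorem hasSqPrefix_iff_exists_take (w : List α) :
    HasSqPrefix w ↔ ∃ k ∈ List.range' 1 (w.length / 2), w.take k ++ w.take k <+: w := by
  constructor
  · rintro ⟨x, hx, hxx⟩
    have hlen := hxx.length_le
    have hpos := List.length_pos_iff.mpr hx
    have htake : w.take x.length = x :=
      (List.prefix_iff_eq_take.mp ((List.prefix_append x x).trans hxx)).symm
    refine ⟨x.length, List.mem_range'_1.mpr ⟨hpos, ?_⟩, by rwa [htake]⟩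
    simp only [List.length_append] at hlen
    omega
  · rintro ⟨k, hk, hpre⟩
    rw [List.mem_range'_1] at hk
    refine ⟨w.take k, fun h => ?_, hpre⟩
    have := congrArg List.length h
    simp only [List.length_take, List.length_nil] at this
    omega

instance [DecidableEq α] : DecidablePred (HasSqPrefix (α := α)) := fun w =>
  decidable_of_iff _ (hasSqPrefix_iff_exists_take w).symm

theorem sqFree_iff_forall_mem_tails (w : List α) :
    SqFree w ↔ ∀ s ∈ w.tails, ¬ HasSqPrefix s := by
  simp only [SqFree, IsSq, HasSqPrefix, List.mem_tails, List.infix_iff_prefix_suffix]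
  constructor
  · rintro h s hs ⟨x, hx, hxx⟩
    exact h _ ⟨s, hxx, hs⟩ ⟨x, hx, rfl⟩
  · rintro h v ⟨s, hvs, hs⟩ ⟨x, hx, rfl⟩
    exact h s hs ⟨x, hx, hvs⟩

instance [DecidableEq α] : DecidablePred (SqFree (α := α)) := fun w =>
  decidable_of_iff _ (sqFree_iff_forall_mem_tails w).symm

theorem SqFree.of_infix {v w : List α} (hw : SqFree w) (hvw : v <:+: w) : SqFree v :=
  fun u huv => hw u (huv.trans hvw)

theorem not_hasSqPrefix_of_sqFree {w : List α} (hw : SqFree w) : ¬ HasSqPrefix w :=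
  fun ⟨x, hx, hxx⟩ => hw (x ++ x) hxx.isInfix ⟨x, hx, rfl⟩

def checkSqFreeExtensions {k : ℕ} (P : List (Fin k) → Prop) [DecidablePred P] :
    ℕ → List (Fin k) → Bool
  | 0, w => decide (P w)
  | n + 1, w => (List.finRange k).all fun c =>
      decide (HasSqPrefix (c :: w)) || checkSqFreeExtensions P n (c :: w)

theorem checkSqFreeExtensions_spec {k : ℕ} (P : List (Fin k) → Prop) [DecidablePred P] :
    ∀ (n : ℕ) (w : List (Fin k)), checkSqFreeExtensions P n w = true →
      ∀ t : List (Fin k), t.length = n → SqFree (t ++ w) → P (t ++ w)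
  | 0, w, hcheck, [], _, _ => of_decide_eq_true hcheck
  | n + 1, w, hcheck, t, ht, hsq => by
    obtain ⟨t, c, rfl⟩ := t.eq_nil_or_concat'.resolve_left (by rintro rfl; simp at ht)
    rw [List.append_assoc, List.singleton_append] at hsq ⊢
    have hcw : SqFree (c :: w) := hsq.of_infix (List.suffix_append _ _).isInfix
    have hnext : checkSqFreeExtensions P n (c :: w) = true := by
      simp only [checkSqFreeExtensions, List.all_eq_true, Bool.or_eq_true] at hcheck
      simpa [not_hasSqPrefix_of_sqFree hcw] using hcheck c (List.mem_finRange c)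
    exact checkSqFreeExtensions_spec P n (c :: w) hnext t (by simpa using ht) hsq

theorem pairs_infix_of_sqFree_of_length_eq_fourteen (w : List (Fin 3)) (hw : SqFree w)
    (hlen : w.length = 14) : ∀ u v : Fin 3, u ≠ v → [u, v] <:+: w := by
  have hcheck : checkSqFreeExtensions (fun w => ∀ u v : Fin 3, u ≠ v → [u, v] <:+: w) 14 [] =
      true := by
    decide
  simpa using checkSqFreeExtensions_spec _ 14 [] hcheck w hlen (by simpa using hw)

/-- Letters: a = 0, b = 1, c = 2.  The word bcbacbcacbaca is
[1,2,1,0,2,1,2,0,2,1,0,2,0]. -/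
theorem stmt18 :
    (∀ w : List (Fin 3), SqFree w → 13 < w.length →
      ∀ u v : Fin 3, u ≠ v → [u, v] <:+: w) ∧
    (SqFree ([1,2,1,0,2,1,2,0,2,1,0,2,0] : List (Fin 3)) ∧
      ([1,2,1,0,2,1,2,0,2,1,0,2,0] : List (Fin 3)).length = 13 ∧
      ¬ ([0,1] : List (Fin 3)) <:+: [1,2,1,0,2,1,2,0,2,1,0,2,0]) := by
  refine ⟨fun w hw hlen u v huv => ?_, by decide, rfl, by decide⟩
  have hsuffix : w.drop (w.length - 14) <:+: w := (List.drop_suffix _ _).isInfix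
  exact (pairs_infix_of_sqFree_of_length_eq_fourteen _ (hw.of_infix hsuffix)
    (by simp; omega) u v huv).trans hsuffix
end
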